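/- arXiv:1507.03291 — 7 statements merged into one kernel-verified Lean document; each statement's English description precedes it below -/
import Mathlib

section
/- The Kuhn-Tucker set Z equals the intersection over all (a,a*) ∈ gra A and (b,b*) ∈ gra B of the half-spaces H_{a,b} = {(x,v*) ∈ H ⊕ G : ⟨x, a*+L*b*⟩ + ⟨b-La, v*⟩ ≤ ⟨a,a*⟩+⟨b,b*⟩}. -/
open scoped InnerProductSpace

/-- A monotone set-valued operator on a real inner product space. -/
def IsMonotoneOp {H : Type*} [NormedAddCommGroup H] [InnerProductSpace ℝ H]
    (A : H → Set H) : Prop :=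
  ∀ x y u v, u ∈ A x → v ∈ A y → 0 ≤ ⟪x - y, u - v⟫_ℝ

/-- A maximally monotone set-valued operator. -/
def IsMaxMonotone {H : Type*} [NormedAddCommGroup H] [InnerProductSpace ℝ H]
    (A : H → Set H) : Prop :=
  IsMonotoneOp A ∧ ∀ x u, (∀ y v, v ∈ A y → 0 ≤ ⟪x - y, u - v⟫_ℝ) → u ∈ A x

theorem IsMaxMonotone.exists_inner_nonpos {H : Type*} [NormedAddCommGroup H]
    [InnerProductSpace ℝ H] {A : H → Set H} (hA : IsMaxMonotone A) (x u : H) :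
    ∃ y v, v ∈ A y ∧ ⟪x - y, u - v⟫_ℝ ≤ 0 := by
  by_cases hxu : u ∈ A x
  · exact ⟨x, u, hxu, by simp⟩
  · by_contra! h
    exact hxu (hA.2 x u fun y v hv => (h y v hv).le)

/-- The product of two maximally monotone operators is maximally monotone. -/
theorem IsMaxMonotone.mem_and_mem_iff_forall_inner_add_inner_nonneg
    {H G : Type*} [NormedAddCommGroup H] [InnerProductSpace ℝ H]
    [NormedAddCommGroup G] [InnerProductSpace ℝ G]
    {A : H → Set H} {B : G → Set G} (hA : IsMaxMonotone A) (hB : IsMaxMonotone B)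
    (x u : H) (y w : G) :
    u ∈ A x ∧ w ∈ B y ↔
      ∀ a a', a' ∈ A a → ∀ b b', b' ∈ B b → 0 ≤ ⟪x - a, u - a'⟫_ℝ + ⟪y - b, w - b'⟫_ℝ := by
  constructor
  · rintro ⟨hu, hw⟩ a a' ha b b' hb
    exact add_nonneg (hA.1 x a u a' hu ha) (hB.1 y b w b' hw hb)
  · intro h
    -- a `B`-point with nonpositive pairing isolates the `A`-term, which gives `u ∈ A x`;
    -- then the pair `(x, u)` itself isolates the `B`-term
    obtain ⟨b₀, b₀', hb₀, hb₀_nonpos⟩ := hB.exists_inner_nonpos y w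
    have hu : u ∈ A x := hA.2 x u fun a a' ha => by linarith [h a a' ha b₀ b₀' hb₀]
    refine ⟨hu, hB.2 y w fun b b' hb => ?_⟩
    simpa using h x u hu b b' hb

/-- The Kuhn–Tucker half-space inequality is the monotonicity inequality of
`(x, -L*v)` against `(a, a')` in `A` plus that of `(Lx, v)` against `(b, b')` in `B`. -/
theorem inner_sub_neg_adjoint_add_inner_sub {H G : Type*}
    [NormedAddCommGroup H] [InnerProductSpace ℝ H] [CompleteSpace H]
    [NormedAddCommGroup G] [InnerProductSpace ℝ G] [CompleteSpace G]
    (L : H →L[ℝ] G) (x a a' : H) (v b b' : G) :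
    ⟪x - a, -(ContinuousLinearMap.adjoint L v) - a'⟫_ℝ + ⟪L x - b, v - b'⟫_ℝ =
      (⟪a, a'⟫_ℝ + ⟪b, b'⟫_ℝ) -
        (⟪x, a' + ContinuousLinearMap.adjoint L b'⟫_ℝ + ⟪b - L a, v⟫_ℝ) := by
  simp only [inner_sub_left, inner_sub_right, inner_add_right, inner_neg_right,
    ContinuousLinearMap.adjoint_inner_right, map_sub]
  ring

/-- The Kuhn-Tucker set equals the intersection, over all `(a,a*) ∈ gra A` and
`(b,b*) ∈ gra B`, of the half-spaces
`H_{a,b} = {(x,v*) : ⟨x, a*+L*b*⟩ + ⟨b-La, v*⟩ ≤ ⟨a,a*⟩+⟨b,b*⟩}`. -/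
theorem kuhnTucker_eq_iInter_halfspaces
    {H G : Type*} [NormedAddCommGroup H] [InnerProductSpace ℝ H] [CompleteSpace H]
    [NormedAddCommGroup G] [InnerProductSpace ℝ G] [CompleteSpace G]
    (A : H → Set H) (B : G → Set G)
    (hA : IsMaxMonotone A) (hB : IsMaxMonotone B)
    (L : H →L[ℝ] G) :
    {p : H × G | -(ContinuousLinearMap.adjoint L p.2) ∈ A p.1 ∧ p.2 ∈ B (L p.1)} =
      ⋂ (a : H) (a' : H) (_ : a' ∈ A a) (b : G) (b' : G) (_ : b' ∈ B b),
        {p : H × G |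
          ⟪p.1, a' + ContinuousLinearMap.adjoint L b'⟫_ℝ + ⟪b - L a, p.2⟫_ℝ ≤
            ⟪a, a'⟫_ℝ + ⟪b, b'⟫_ℝ} := by
  ext ⟨x, v⟩
  simp only [Set.mem_ofPred_eq, Set.mem_iInter,
    hA.mem_and_mem_iff_forall_inner_add_inner_nonneg hB, inner_sub_neg_adjoint_add_inner_sub,
    sub_nonneg]
end

section
/- Let (aₙ,aₙ*) be a sequence in gra A and (bₙ,bₙ*) a sequence in gra B, and let x ∈ H, v* ∈ G. If aₙ ⇀ x weakly, bₙ* ⇀ v* weakly, aₙ* + L*bₙ* → 0 strongly, and Laₙ - bₙ → 0 strongly, then (x,v*) ∈ Z, i.e., -L*v* ∈ Ax and Lx ∈ B⁻¹v*. -/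
/-!
Monotonicity of `A` and `B` makes `⟪aₙ - y, aₙ* - u⟫ + ⟪bₙ - z, bₙ* - w⟫ ≥ 0` for every
`(y,u) ∈ gra A`, `(z,w) ∈ gra B`. Substituting `aₙ* = eₙ - L*bₙ*` and `bₙ = Laₙ - dₙ`
with `eₙ, dₙ → 0` cancels the product `⟪Laₙ, bₙ*⟫` of the two weakly convergent sequences;
what remains is an affine function of `(aₙ, bₙ*)` plus products of bounded and null
sequences, so it passes to the weak limit and gives
`⟪x - y, -L*v* - u⟫ + ⟪Lx - z, v* - w⟫ ≥ 0`. Maximality of `A` and `B` then places `(x,v*)`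
in `Z`: if `v* ∉ B(Lx)`, some `(z,w)` makes the second summand negative, which forces
`-L*v* ∈ Ax` and then contradicts the inequality at `(y,u) = (x,-L*v*)`.
-/

open scoped InnerProductSpace

open Filter Topology

def WeakTendsto {H : Type*} [NormedAddCommGroup H] [InnerProductSpace ℝ H]
    (c : ℕ → H) (p : H) : Prop :=
  ∀ w : H, Tendsto (fun n => ⟪c n, w⟫_ℝ) atTop (𝓝 ⟪p, w⟫_ℝ)

namespace WeakTendsto

variable {H G : Type*} [NormedAddCommGroup H] [InnerProductSpace ℝ H]
  [NormedAddCommGroup G] [InnerProductSpace ℝ G] {c : ℕ → H} {p : H}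

theorem sub_const (h : WeakTendsto c p) (y : H) :
    WeakTendsto (fun n => c n - y) (p - y) := fun w => by
  simpa only [inner_sub_left] using (h w).sub_const ⟪y, w⟫_ℝ

theorem map [CompleteSpace H] [CompleteSpace G] (h : WeakTendsto c p) (L : H →L[ℝ] G) :
    WeakTendsto (fun n => L (c n)) (L p) := fun w => by
  simpa only [ContinuousLinearMap.adjoint_inner_right] using h (ContinuousLinearMap.adjoint L w)

theorem exists_norm_le [CompleteSpace H] (h : WeakTendsto c p) : ∃ M, ∀ n, ‖c n‖ ≤ M := by
  obtain ⟨M, hM⟩ := banach_steinhaus (g := fun n => innerSL ℝ (c n)) fun w => by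
    obtain ⟨C, hC⟩ := (h w).norm.bddAbove_range
    exact ⟨C, fun n => hC (Set.mem_range_self n)⟩
  exact ⟨M, fun n => by simpa [innerSL_apply_norm] using hM n⟩

theorem inner_tendsto_zero [CompleteSpace H] (h : WeakTendsto c p) {e : ℕ → H}
    (he : Tendsto e atTop (𝓝 0)) : Tendsto (fun n => ⟪c n, e n⟫_ℝ) atTop (𝓝 0) := by
  obtain ⟨M, hM⟩ := h.exists_norm_le
  refine squeeze_zero_norm (fun n => ?_) (by simpa using he.norm.const_mul M)
  calc ‖⟪c n, e n⟫_ℝ‖ ≤ ‖c n‖ * ‖e n‖ := norm_inner_le_norm _ _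
    _ ≤ M * ‖e n‖ := by gcongr; exact hM n

end WeakTendsto

section KuhnTucker

variable {H G : Type*} [NormedAddCommGroup H] [InnerProductSpace ℝ H]
  [NormedAddCommGroup G] [InnerProductSpace ℝ G]

theorem inner_sub_add_inner_sub_eq [CompleteSpace H] [CompleteSpace G] (L : H →L[ℝ] G) (p y p' u : H) (q z q' w : G) :
    ⟪p - y, p' - u⟫_ℝ + ⟪q - z, q' - w⟫_ℝ =
      ⟪p - y, p' + ContinuousLinearMap.adjoint L q'⟫_ℝ - ⟪q' - w, L p - q⟫_ℝ
        + (⟪q', L y - z⟫_ℝ - ⟪p - y, u⟫_ℝ - ⟪L p - z, w⟫_ℝ) := by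
  simp only [inner_sub_left, inner_sub_right, inner_add_right,
    ContinuousLinearMap.adjoint_inner_right, map_sub]
  rw [real_inner_comm q' (L p), real_inner_comm q' q, real_inner_comm q' (L y),
    real_inner_comm q' z, real_inner_comm w (L p), real_inner_comm w q]
  ring

theorem inner_sub_add_inner_sub_nonneg_of_graph_limits [CompleteSpace H] [CompleteSpace G]
    {A : H → Set H} {B : G → Set G} (hA : IsMonotoneOp A) (hB : IsMonotoneOp B)
    (L : H →L[ℝ] G) {a a' : ℕ → H} {b b' : ℕ → G}
    (hgraA : ∀ n, a' n ∈ A (a n)) (hgraB : ∀ n, b' n ∈ B (b n))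
    {x : H} {v : G} (ha : WeakTendsto a x) (hb' : WeakTendsto b' v)
    (hsum : Tendsto (fun n => a' n + ContinuousLinearMap.adjoint L (b' n)) atTop (𝓝 0))
    (hLab : Tendsto (fun n => L (a n) - b n) atTop (𝓝 0))
    {y u : H} (hu : u ∈ A y) {z w : G} (hw : w ∈ B z) :
    0 ≤ ⟪x - y, -(ContinuousLinearMap.adjoint L v) - u⟫_ℝ + ⟪L x - z, v - w⟫_ℝ := by
  have hmono : ∀ n, 0 ≤ ⟪a n - y, a' n - u⟫_ℝ + ⟪b n - z, b' n - w⟫_ℝ := fun n =>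
    add_nonneg (hA _ _ _ _ (hgraA n) hu) (hB _ _ _ _ (hgraB n) hw)
  have hlim : Tendsto (fun n => ⟪a n - y, a' n - u⟫_ℝ + ⟪b n - z, b' n - w⟫_ℝ) atTop
      (𝓝 (⟪x - y, -(ContinuousLinearMap.adjoint L v) - u⟫_ℝ + ⟪L x - z, v - w⟫_ℝ)) := by
    have hnull := ((ha.sub_const y).inner_tendsto_zero hsum).sub
      ((hb'.sub_const w).inner_tendsto_zero hLab)
    have haffine := ((hb' (L y - z)).sub (ha.sub_const y u)).sub ((ha.map L).sub_const z w)
    simp_rw [inner_sub_add_inner_sub_eq L]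
    simpa using hnull.add haffine
  exact ge_of_tendsto' hlim hmono

theorem IsMaxMonotone.mem_and_mem_of_inner_add_inner_nonneg
    {A : H → Set H} {B : G → Set G} (hA : IsMaxMonotone A) (hB : IsMaxMonotone B)
    {x p : H} {s v : G}
    (h : ∀ y u, u ∈ A y → ∀ z w, w ∈ B z → 0 ≤ ⟪x - y, p - u⟫_ℝ + ⟪s - z, v - w⟫_ℝ) :
    p ∈ A x ∧ v ∈ B s := by
  have hv : v ∈ B s := hB.2 s v fun z w hw => by
    by_contra! hneg
    have hp : p ∈ A x := hA.2 x p fun y u hu => by linarith [h y u hu z w hw]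
    have := h x p hp z w hw
    simp only [sub_self, inner_zero_left, zero_add] at this
    linarith
  refine ⟨hA.2 x p fun y u hu => ?_, hv⟩
  simpa using h y u hu s v hv

end KuhnTucker

/-- If `(aₙ,aₙ*) ∈ gra A`, `(bₙ,bₙ*) ∈ gra B`, `aₙ ⇀ x`, `bₙ* ⇀ v*` weakly,
`aₙ* + L*bₙ* → 0` and `Laₙ - bₙ → 0` strongly, then `(x,v*)` is a Kuhn-Tucker
point: `-L*v* ∈ Ax` and `Lx ∈ B⁻¹v*`. -/
theorem kuhnTucker_of_graph_limits
    {H G : Type*} [NormedAddCommGroup H] [InnerProductSpace ℝ H] [CompleteSpace H]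
    [NormedAddCommGroup G] [InnerProductSpace ℝ G] [CompleteSpace G]
    (A : H → Set H) (B : G → Set G)
    (hA : IsMaxMonotone A) (hB : IsMaxMonotone B)
    (L : H →L[ℝ] G)
    (a a' : ℕ → H) (b b' : ℕ → G)
    (hgraA : ∀ n, a' n ∈ A (a n)) (hgraB : ∀ n, b' n ∈ B (b n))
    (x : H) (v : G)
    (haw : ∀ w : H, Tendsto (fun n => ⟪a n, w⟫_ℝ) atTop (𝓝 ⟪x, w⟫_ℝ))
    (hbw : ∀ w : G, Tendsto (fun n => ⟪b' n, w⟫_ℝ) atTop (𝓝 ⟪v, w⟫_ℝ))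
    (hsum : Tendsto (fun n => a' n + ContinuousLinearMap.adjoint L (b' n)) atTop (𝓝 0))
    (hLab : Tendsto (fun n => L (a n) - b n) atTop (𝓝 0)) :
    -(ContinuousLinearMap.adjoint L v) ∈ A x ∧ v ∈ B (L x) :=
  hA.mem_and_mem_of_inner_add_inner_nonneg hB fun _ _ hu _ _ hw =>
    inner_sub_add_inner_sub_nonneg_of_graph_limits hA.1 hB.1 L hgraA hgraB haw hbw hsum hLab hu hw
end

section
/- Let K be a real Hilbert space, (x,y,z) ∈ K³, and define H(x,y) = {h ∈ K : ⟨h-y, x-y⟩ ≤ 0}. Set χ = ⟨x-y, y-z⟩, μ = ‖x-y‖², ν = ‖y-z‖², ρ = μν - χ². If ρ = 0 and χ < 0, then H(x,y) ∩ H(y,z) = ∅. -/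
open scoped InnerProductSpace

/-- The half-space through `y` with outer normal `x - y`. -/
def haugH {E : Type*} [NormedAddCommGroup E] [InnerProductSpace ℝ E] (x y : E) : Set E :=
  {h : E | ⟪h - y, x - y⟫_ℝ ≤ 0}

/-!
`ρ = 0` is the equality case of Cauchy–Schwarz, so `x - y` and `y - z` are parallel, and `χ < 0`
makes `x - y` a negative multiple of `y - z ≠ 0`. Then `H(x,y)` is the half-space
`⟪h - y, y - z⟫ ≥ 0`, while `H(y,z)` is `⟪h - y, y - z⟫ ≤ -‖y - z‖² < 0`.
-/

section

variable {E : Type*} [NormedAddCommGroup E] [InnerProductSpace ℝ E]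

theorem real_inner_eq_neg_norm_mul_of_sq_eq {u v : E}
    (hsq : ‖u‖ ^ 2 * ‖v‖ ^ 2 - ⟪u, v⟫_ℝ ^ 2 = 0) (hneg : ⟪u, v⟫_ℝ < 0) :
    ⟪u, v⟫_ℝ = -(‖u‖ * ‖v‖) := by
  have hsq' : ⟪u, v⟫_ℝ ^ 2 = (‖u‖ * ‖v‖) ^ 2 := by linarith
  rcases eq_or_eq_neg_of_sq_eq_sq _ _ hsq' with h | h
  · linarith [mul_nonneg (norm_nonneg u) (norm_nonneg v)]
  · exact h

theorem exists_neg_smul_of_sq_eq {u v : E}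
    (hsq : ‖u‖ ^ 2 * ‖v‖ ^ 2 - ⟪u, v⟫_ℝ ^ 2 = 0) (hneg : ⟪u, v⟫_ℝ < 0) :
    v ≠ 0 ∧ ∃ r : ℝ, r < 0 ∧ u = r • v := by
  have hnorm : ⟪u, v⟫_ℝ = -(‖u‖ * ‖v‖) := real_inner_eq_neg_norm_mul_of_sq_eq hsq hneg
  have hpos : ‖u‖ * ‖v‖ ≠ 0 := by linarith
  rw [← real_inner_div_norm_mul_norm_eq_neg_one_iff, real_inner_comm, hnorm, mul_comm ‖v‖,
    neg_div, div_self hpos]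

theorem haugH_inter_haugH_eq_empty_of_eq_smul {x y z : E} (hyz : y ≠ z) {r : ℝ} (hr : r < 0)
    (hxy : x - y = r • (y - z)) : haugH x y ∩ haugH y z = ∅ := by
  refine Set.eq_empty_of_forall_notMem fun w ⟨hwx, hwz⟩ => ?_
  simp only [haugH, Set.mem_ofPred_eq, hxy, real_inner_smul_right] at hwx hwz
  have hwy : 0 ≤ ⟪w - y, y - z⟫_ℝ := nonneg_of_mul_nonpos_right hwx hr
  have hsplit : ⟪w - z, y - z⟫_ℝ = ⟪w - y, y - z⟫_ℝ + ‖y - z‖ ^ 2 := by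
    rw [← real_inner_self_eq_norm_sq, ← inner_add_left, sub_add_sub_cancel]
  have hgap : 0 < ‖y - z‖ ^ 2 := by positivity [sub_ne_zero.mpr hyz]
  linarith

end

theorem haugazeau_empty_general
    {E : Type*} [NormedAddCommGroup E] [InnerProductSpace ℝ E]
    (x y z : E)
    (χ μ ν ρ : ℝ)
    (hχ : χ = ⟪x - y, y - z⟫_ℝ) (hμ : μ = ‖x - y‖ ^ 2) (hν : ν = ‖y - z‖ ^ 2)
    (hρ : ρ = μ * ν - χ ^ 2)
    (h0 : ρ = 0) (hneg : χ < 0) :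
    haugH x y ∩ haugH y z = ∅ := by
  subst hχ hμ hν hρ
  obtain ⟨hyz, r, hr, hxy⟩ := exists_neg_smul_of_sq_eq h0 hneg
  exact haugH_inter_haugH_eq_empty_of_eq_smul (sub_ne_zero.mp hyz) hr hxy

/-- If `ρ = μν - χ² = 0` and `χ < 0`, then `H(x,y) ∩ H(y,z) = ∅`. -/
theorem haugazeau_empty
    {E : Type*} [NormedAddCommGroup E] [InnerProductSpace ℝ E] [CompleteSpace E]
    (x y z : E)
    (χ μ ν ρ : ℝ)
    (hχ : χ = ⟪x - y, y - z⟫_ℝ) (hμ : μ = ‖x - y‖ ^ 2) (hν : ν = ‖y - z‖ ^ 2)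
    (hρ : ρ = μ * ν - χ ^ 2)
    (h0 : ρ = 0) (hneg : χ < 0) :
    haugH x y ∩ haugH y z = ∅ :=
  haugazeau_empty_general x y z χ μ ν ρ hχ hμ hν hρ h0 hneg
end

section
/- Let K be a real Hilbert space, (x,y,z) ∈ K³, H(x,y) = {h : ⟨h-y, x-y⟩ ≤ 0}, χ = ⟨x-y,y-z⟩, μ = ‖x-y‖², ν = ‖y-z‖², ρ = μν - χ². If ρ = 0 and χ ≥ 0, then z ∈ H(x,y) ∩ H(y,z) and z is the projection of x onto H(x,y) ∩ H(y,z). -/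
/-!
Equality `ρ = 0` in the Cauchy–Schwarz inequality, together with `χ ≥ 0`, makes `x - y` and
`y - z` positively parallel. Hence, for `h` in both half-spaces, `⟪x - z, h - z⟫ ≤ 0`: the
`y - z` part is nonpositive because `h ∈ H(y,z)`, and the `x - y` part is a nonnegative multiple
of it (or, if `y = z`, nonpositive because `h ∈ H(x,y)`). This is the variational inequality
characterising `z` as the nearest point to `x`.
-/

open scoped InnerProductSpace

section

variable {E : Type*} [NormedAddCommGroup E] [InnerProductSpace ℝ E]

theorem norm_sub_le_norm_sub_of_inner_nonpos {x z h : E} (hh : ⟪x - z, h - z⟫_ℝ ≤ 0) :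
    ‖x - z‖ ≤ ‖x - h‖ := by
  have hexpand : ‖x - h‖ ^ 2 = ‖x - z‖ ^ 2 - 2 * ⟪x - z, h - z⟫_ℝ + ‖h - z‖ ^ 2 := by
    rw [← norm_sub_sq_real, sub_sub_sub_cancel_right]
  have hsq : ‖x - z‖ ^ 2 ≤ ‖x - h‖ ^ 2 := by nlinarith [sq_nonneg ‖h - z‖]
  exact (pow_le_pow_iff_left₀ (norm_nonneg _) (norm_nonneg _) two_ne_zero).1 hsq

theorem real_inner_eq_norm_mul_norm_of_sq_eq {u v : E} (hnonneg : 0 ≤ ⟪u, v⟫_ℝ)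
    (hsq : ‖u‖ ^ 2 * ‖v‖ ^ 2 = ⟪u, v⟫_ℝ ^ 2) : ⟪u, v⟫_ℝ = ‖u‖ * ‖v‖ := by
  rw [← sq_eq_sq₀ hnonneg (by positivity), mul_pow, hsq]

theorem self_mem_haugH (y z : E) : z ∈ haugH y z := by
  simp [haugH]

theorem mem_haugH_of_inner_nonneg {x y z : E} (hpos : 0 ≤ ⟪x - y, y - z⟫_ℝ) :
    z ∈ haugH x y := by
  have hneg : z - y = -(y - z) := (neg_sub y z).symm
  simp only [haugH, Set.mem_ofPred_eq, hneg, inner_neg_left, real_inner_comm (x - y) (y - z)]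
  linarith

theorem inner_sub_nonpos_of_mem_haugH_inter {x y z h : E}
    (hpar : ‖y - z‖ • (x - y) = ‖x - y‖ • (y - z)) (hh : h ∈ haugH x y ∩ haugH y z) :
    ⟪x - z, h - z⟫_ℝ ≤ 0 := by
  obtain ⟨hxy, hyz⟩ := hh
  simp only [haugH, Set.mem_ofPred_eq] at hxy hyz
  rw [real_inner_comm] at hxy hyz
  have hsplit : x - z = (x - y) + (y - z) := (sub_add_sub_cancel x y z).symm
  rw [hsplit, inner_add_left]
  rcases (norm_nonneg (y - z)).eq_or_lt with hzero | hlt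
  · obtain rfl : y = z := sub_eq_zero.1 (norm_eq_zero.1 hzero.symm)
    simpa using hxy
  · have hscaled : ‖y - z‖ * ⟪x - y, h - z⟫_ℝ = ‖x - y‖ * ⟪y - z, h - z⟫_ℝ := by
      rw [← real_inner_smul_left, ← real_inner_smul_left, hpar]
    have hxy' : ⟪x - y, h - z⟫_ℝ ≤ 0 := by
      nlinarith [mul_nonpos_of_nonneg_of_nonpos (norm_nonneg (x - y)) hyz]
    linarith

end

theorem haugazeau_proj_eq_z_general
    {E : Type*} [NormedAddCommGroup E] [InnerProductSpace ℝ E]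
    (x y z : E)
    (χ μ ν ρ : ℝ)
    (hχ : χ = ⟪x - y, y - z⟫_ℝ) (hμ : μ = ‖x - y‖ ^ 2) (hν : ν = ‖y - z‖ ^ 2)
    (hρ : ρ = μ * ν - χ ^ 2)
    (h0 : ρ = 0) (hpos : 0 ≤ χ) :
    z ∈ haugH x y ∩ haugH y z ∧
      ∀ h ∈ haugH x y ∩ haugH y z, ‖x - z‖ ≤ ‖x - h‖ := by
  subst hχ hμ hν hρ
  have hpar : ‖y - z‖ • (x - y) = ‖x - y‖ • (y - z) :=
    inner_eq_norm_mul_iff_real.1 (real_inner_eq_norm_mul_norm_of_sq_eq hpos (by linarith))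
  exact ⟨⟨mem_haugH_of_inner_nonneg hpos, self_mem_haugH y z⟩, fun h hh =>
    norm_sub_le_norm_sub_of_inner_nonpos (inner_sub_nonpos_of_mem_haugH_inter hpar hh)⟩

/-- If `ρ = 0` and `χ ≥ 0`, then `z` belongs to `H(x,y) ∩ H(y,z)` and is the
projection of `x` onto that set. -/
theorem haugazeau_proj_eq_z
    {E : Type*} [NormedAddCommGroup E] [InnerProductSpace ℝ E] [CompleteSpace E]
    (x y z : E)
    (χ μ ν ρ : ℝ)
    (hχ : χ = ⟪x - y, y - z⟫_ℝ) (hμ : μ = ‖x - y‖ ^ 2) (hν : ν = ‖y - z‖ ^ 2)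
    (hρ : ρ = μ * ν - χ ^ 2)
    (h0 : ρ = 0) (hpos : 0 ≤ χ) :
    z ∈ haugH x y ∩ haugH y z ∧
      ∀ h ∈ haugH x y ∩ haugH y z, ‖x - z‖ ≤ ‖x - h‖ :=
  haugazeau_proj_eq_z_general x y z χ μ ν ρ hχ hμ hν hρ h0 hpos
end

section
/- Let K be a real Hilbert space, (x,y,z) ∈ K³, H(x,y) = {h : ⟨h-y,x-y⟩ ≤ 0}, χ = ⟨x-y,y-z⟩, μ = ‖x-y‖², ν = ‖y-z‖², ρ = μν - χ². If ρ > 0 and χν ≥ ρ, then the projection of x onto H(x,y) ∩ H(y,z) is x + (1 + χ/ν)(z - y). -/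
open scoped InnerProductSpace

/-!
Write `α = 1 + χ/ν` and `p = x + α (z - y)`. Then `x - p = α (y - z)` and `p` lies on the
boundary hyperplane of `H(y,z)`, so `p` is the projection of `x` onto the larger set `H(y,z)`.
It remains to see that `p ∈ H(x,y)`: there `⟪p - y, x - y⟫ = μ - αχ = (ρ - χν)/ν ≤ 0`.
-/

section HalfSpace

variable {E : Type*} [NormedAddCommGroup E] [InnerProductSpace ℝ E]

theorem norm_sub_le_norm_sub_of_inner_nonneg {x p h : E} (hp : 0 ≤ ⟪x - p, p - h⟫_ℝ) :
    ‖x - p‖ ≤ ‖x - h‖ := by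
  have hsq : ‖x - p‖ ^ 2 ≤ ‖x - h‖ ^ 2 := by
    rw [← sub_add_sub_cancel x p h, norm_add_sq_real]
    nlinarith [sq_nonneg ‖p - h‖]
  exact (pow_le_pow_iff_left₀ (norm_nonneg _) (norm_nonneg _) two_ne_zero).mp hsq

theorem norm_sub_le_of_mem_haugH {x y z p h : E} {c : ℝ} (hc : 0 ≤ c)
    (hxp : x - p = c • (y - z)) (hp : ⟪p - z, y - z⟫_ℝ = 0) (hh : h ∈ haugH y z) :
    ‖x - p‖ ≤ ‖x - h‖ := by
  apply norm_sub_le_norm_sub_of_inner_nonneg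
  have hh' : ⟪h - z, y - z⟫_ℝ ≤ 0 := hh
  rw [hxp, ← sub_sub_sub_cancel_right p h z, real_inner_smul_left, inner_sub_right,
    real_inner_comm, hp, real_inner_comm]
  nlinarith

theorem inner_add_smul_sub_sub_left (x y z : E) (α : ℝ) :
    ⟪x + α • (z - y) - y, x - y⟫_ℝ = ‖x - y‖ ^ 2 - α * ⟪x - y, y - z⟫_ℝ := by
  rw [show x + α • (z - y) - y = (x - y) - α • (y - z) by module, inner_sub_left,
    real_inner_smul_left, real_inner_self_eq_norm_sq, real_inner_comm]

theorem inner_add_smul_sub_sub_right (x y z : E) (α : ℝ) :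
    ⟪x + α • (z - y) - z, y - z⟫_ℝ = ⟪x - y, y - z⟫_ℝ + (1 - α) * ‖y - z‖ ^ 2 := by
  rw [show x + α • (z - y) - z = (x - y) + (1 - α) • (y - z) by module, inner_add_left,
    real_inner_smul_left, real_inner_self_eq_norm_sq]

end HalfSpace

theorem haugazeau_proj_case2_general
    {E : Type*} [NormedAddCommGroup E] [InnerProductSpace ℝ E]
    (x y z : E)
    (χ μ ν ρ : ℝ)
    (hχ : χ = ⟪x - y, y - z⟫_ℝ) (hμ : μ = ‖x - y‖ ^ 2) (hν : ν = ‖y - z‖ ^ 2)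
    (hρ : ρ = μ * ν - χ ^ 2)
    (h0 : 0 < ρ) (hcase : χ * ν ≥ ρ) :
    x + (1 + χ / ν) • (z - y) ∈ haugH x y ∩ haugH y z ∧
      ∀ h ∈ haugH x y ∩ haugH y z,
        ‖x - (x + (1 + χ / ν) • (z - y))‖ ≤ ‖x - h‖ := by
  have hν0 : 0 < ν := by
    have : 0 ≤ ν := hν ▸ sq_nonneg _
    nlinarith [sq_nonneg χ]
  have hχ0 : 0 < χ := by nlinarith
  have hbdry : ⟪x + (1 + χ / ν) • (z - y) - z, y - z⟫_ℝ = 0 := by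
    rw [inner_add_smul_sub_sub_right, ← hχ, ← hν]
    field_simp
    ring
  have hmem : ⟪x + (1 + χ / ν) • (z - y) - y, x - y⟫_ℝ ≤ 0 := by
    rw [inner_add_smul_sub_sub_left, ← hχ, ← hμ,
      show μ - (1 + χ / ν) * χ = (ρ - χ * ν) / ν by rw [hρ]; field_simp; ring]
    exact div_nonpos_of_nonpos_of_nonneg (by linarith) hν0.le
  have hα : 0 ≤ 1 + χ / ν := by positivity
  refine ⟨⟨hmem, hbdry.le⟩, fun h hh => norm_sub_le_of_mem_haugH hα ?_ hbdry hh.2⟩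
  module

/-- If `ρ > 0` and `χν ≥ ρ`, then the projection of `x` onto
`H(x,y) ∩ H(y,z)` is `x + (1 + χ/ν)(z - y)`. -/
theorem haugazeau_proj_case2
    {E : Type*} [NormedAddCommGroup E] [InnerProductSpace ℝ E] [CompleteSpace E]
    (x y z : E)
    (χ μ ν ρ : ℝ)
    (hχ : χ = ⟪x - y, y - z⟫_ℝ) (hμ : μ = ‖x - y‖ ^ 2) (hν : ν = ‖y - z‖ ^ 2)
    (hρ : ρ = μ * ν - χ ^ 2)
    (h0 : 0 < ρ) (hcase : χ * ν ≥ ρ) :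
    x + (1 + χ / ν) • (z - y) ∈ haugH x y ∩ haugH y z ∧
      ∀ h ∈ haugH x y ∩ haugH y z,
        ‖x - (x + (1 + χ / ν) • (z - y))‖ ≤ ‖x - h‖ :=
  haugazeau_proj_case2_general x y z χ μ ν ρ hχ hμ hν hρ h0 hcase
end

section
/- Let C be a nonempty closed convex subset of a real Hilbert space K, x₀ ∈ K, and let (xₙ) be generated by: choose xₙ₊½ ∈ K with C ⊆ H(xₙ, xₙ₊½), then set xₙ₊₁ = projection of x₀ onto H(x₀,xₙ) ∩ H(xₙ, xₙ₊½). Then the sequence is well defined and for all n: ‖xₙ - x₀‖ ≤ ‖xₙ₊₁ - x₀‖ ≤ ‖P_C x₀ - x₀‖, and C ⊆ H(x₀,xₙ) ∩ H(xₙ,xₙ₊½). -/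
open scoped InnerProductSpace
open Filter Topology

/-!
Write `Dₙ = H(x₀, xₙ) ∩ H(xₙ, xₙ₊½)`, so `xₙ₊₁` is the projection of `x₀` onto the convex set `Dₙ`.
By the variational inequality of that projection, `Dₙ ⊆ H(x₀, xₙ₊₁)`; hence `C ⊆ H(x₀, xₙ)` by
induction, starting from `H(x₀, x₀) = E`, and so `C ⊆ Dₙ`. Since `xₙ` is the projection of `x₀` onto
`H(x₀, xₙ) ⊇ Dₙ ⊇ C`, the distance to `x₀` grows along the iteration and stays below that of `P_C x₀`.
-/

section HalfSpace

variable {E : Type*} [NormedAddCommGroup E] [InnerProductSpace ℝ E]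

theorem convex_haugH (x y : E) : Convex ℝ (haugH x y) := by
  have h : haugH x y = {h | innerSL ℝ (x - y) h ≤ ⟪x - y, y⟫_ℝ} := by
    ext h
    rw [haugH, Set.mem_ofPred_eq, Set.mem_ofPred_eq, innerSL_apply_apply, inner_sub_left,
      sub_nonpos, real_inner_comm, real_inner_comm y]
  exact h ▸ convex_halfSpace_le (innerSL ℝ (x - y)).isLinear _

@[simp]
theorem haugH_self_left (x : E) : haugH x x = Set.univ := by
  ext h
  simp [haugH]

theorem norm_sub_le_norm_sub_of_mem_haugH {x y z : E} (hz : z ∈ haugH x y) :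
    ‖y - x‖ ≤ ‖z - x‖ := by
  have hsq : ‖z - x‖ ^ 2 = ‖z - y‖ ^ 2 - 2 * ⟪z - y, x - y⟫_ℝ + ‖y - x‖ ^ 2 := by
    rw [← sub_sub_sub_cancel_right z x y, norm_sub_sq_real, norm_sub_rev x y]
  have hz' : ⟪z - y, x - y⟫_ℝ ≤ 0 := hz
  nlinarith [norm_nonneg (z - x), norm_nonneg (y - x), sq_nonneg ‖z - y‖]

theorem subset_haugH_of_forall_norm_sub_le {D : Set E} (hD : Convex ℝ D) {u p : E} (hp : p ∈ D)
    (hmin : ∀ y ∈ D, ‖u - p‖ ≤ ‖u - y‖) : D ⊆ haugH u p := by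
  have : Nonempty D := ⟨⟨p, hp⟩⟩
  have hinf : ‖u - p‖ = ⨅ w : D, ‖u - w‖ :=
    le_antisymm (le_ciInf fun w => hmin w w.2)
      (ciInf_le (f := fun w : D => ‖u - w‖)
        ⟨0, Set.forall_mem_range.2 fun _ => norm_nonneg _⟩ ⟨p, hp⟩)
  intro w hw
  rw [haugH, Set.mem_ofPred_eq, real_inner_comm]
  exact (norm_eq_iInf_iff_real_inner_le_zero hD hp).1 hinf w hw

end HalfSpace

theorem haugazeau_iteration_basic_general
    {E : Type*} [NormedAddCommGroup E] [InnerProductSpace ℝ E]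
    (C : Set E)
    (x₀ : E) (pC : E) (hpC : pC ∈ C ∧ ∀ y ∈ C, ‖x₀ - pC‖ ≤ ‖x₀ - y‖)
    (x xh : ℕ → E) (hx0 : x 0 = x₀)
    (hCH : ∀ n, C ⊆ haugH (x n) (xh n))
    (hproj : ∀ n, x (n + 1) ∈ haugH x₀ (x n) ∩ haugH (x n) (xh n) ∧
      ∀ y ∈ haugH x₀ (x n) ∩ haugH (x n) (xh n), ‖x₀ - x (n + 1)‖ ≤ ‖x₀ - y‖) :
    ∀ n, (‖x n - x₀‖ ≤ ‖x (n + 1) - x₀‖ ∧ ‖x (n + 1) - x₀‖ ≤ ‖pC - x₀‖) ∧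
      C ⊆ haugH x₀ (x n) ∩ haugH (x n) (xh n) := by
  have hD_subset n : haugH x₀ (x n) ∩ haugH (x n) (xh n) ⊆ haugH x₀ (x (n + 1)) :=
    subset_haugH_of_forall_norm_sub_le ((convex_haugH _ _).inter (convex_haugH _ _))
      (hproj n).1 (hproj n).2
  have hC_subset n : C ⊆ haugH x₀ (x n) ∩ haugH (x n) (xh n) := by
    induction n with
    | zero => simpa [hx0] using hCH 0
    | succ n ih => exact Set.subset_inter (ih.trans (hD_subset n)) (hCH (n + 1))
  intro n
  refine ⟨⟨norm_sub_le_norm_sub_of_mem_haugH (hproj n).1.1, ?_⟩, hC_subset n⟩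
  simpa only [norm_sub_rev x₀] using (hproj n).2 pC (hC_subset n hpC.1)

/-- In the Haugazeau iteration, the iterates satisfy
`‖xₙ - x₀‖ ≤ ‖xₙ₊₁ - x₀‖ ≤ ‖P_C x₀ - x₀‖` and
`C ⊆ H(x₀,xₙ) ∩ H(xₙ,xₙ₊½)` for every `n`. -/
theorem haugazeau_iteration_basic
    {E : Type*} [NormedAddCommGroup E] [InnerProductSpace ℝ E] [CompleteSpace E]
    (C : Set E) (hCne : C.Nonempty) (hCcl : IsClosed C) (hCcv : Convex ℝ C)
    (x₀ : E) (pC : E) (hpC : pC ∈ C ∧ ∀ y ∈ C, ‖x₀ - pC‖ ≤ ‖x₀ - y‖)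
    (x xh : ℕ → E) (hx0 : x 0 = x₀)
    (hCH : ∀ n, C ⊆ haugH (x n) (xh n))
    (hproj : ∀ n, x (n + 1) ∈ haugH x₀ (x n) ∩ haugH (x n) (xh n) ∧
      ∀ y ∈ haugH x₀ (x n) ∩ haugH (x n) (xh n), ‖x₀ - x (n + 1)‖ ≤ ‖x₀ - y‖) :
    ∀ n, (‖x n - x₀‖ ≤ ‖x (n + 1) - x₀‖ ∧ ‖x (n + 1) - x₀‖ ≤ ‖pC - x₀‖) ∧
      C ⊆ haugH x₀ (x n) ∩ haugH (x n) (xh n) :=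
  haugazeau_iteration_basic_general C x₀ pC hpC x xh hx0 hCH hproj
end

section
/- In the Haugazeau iteration xₙ₊₁ = projection of x₀ onto H(x₀,xₙ) ∩ H(xₙ,xₙ₊½), where C ⊆ H(xₙ,xₙ₊½) at each step, one has Σₙ ‖xₙ₊₁ - xₙ‖² < +∞ and Σₙ ‖xₙ₊½ - xₙ‖² < +∞. -/
/-!
Both summability claims follow from one Pythagorean inequality: if `z ∈ haugH x y`, the angle at
`y` in the triangle `x y z` is obtuse, so `‖x - y‖² + ‖z - y‖² ≤ ‖x - z‖²`.

Since `xₙ₊₁ ∈ haugH x₀ xₙ`, this gives `‖x₀ - xₙ‖² + ‖xₙ₊₁ - xₙ‖² ≤ ‖x₀ - xₙ₊₁‖²`, so the first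
series telescopes against `‖x₀ - xₙ‖²`. That quantity is bounded by `‖x₀ - c‖²` for any `c ∈ C`,
because the variational characterisation of the projection `xₙ₊₁` keeps `C` inside every
`haugH x₀ xₙ`. Since `xₙ₊₁ ∈ haugH xₙ xₙ₊½`, the same inequality gives
`‖xₙ₊½ - xₙ‖ ≤ ‖xₙ₊₁ - xₙ‖`, and the second series is dominated by the first.
-/

open scoped InnerProductSpace
open Filter Topology

theorem summable_of_le_sub_succ_of_le {a b : ℕ → ℝ} {M : ℝ} (hb : ∀ n, 0 ≤ b n)
    (hab : ∀ n, b n ≤ a (n + 1) - a n) (haM : ∀ n, a n ≤ M) : Summable b := by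
  refine summable_of_sum_range_le (c := M - a 0) hb fun N => ?_
  calc ∑ k ∈ Finset.range N, b k
      ≤ ∑ k ∈ Finset.range N, (a (k + 1) - a k) := Finset.sum_le_sum fun k _ => hab k
    _ = a N - a 0 := Finset.sum_range_sub a N
    _ ≤ M - a 0 := by linarith [haM N]

section HaugH

variable {E : Type*} [NormedAddCommGroup E] [InnerProductSpace ℝ E]

theorem norm_sub_sq_add_norm_sub_sq_le_of_mem_haugH {x y z : E} (hz : z ∈ haugH x y) :
    ‖x - y‖ ^ 2 + ‖z - y‖ ^ 2 ≤ ‖x - z‖ ^ 2 := by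
  have hexpand : ‖x - z‖ ^ 2 = ‖x - y‖ ^ 2 - 2 * ⟪x - y, z - y⟫_ℝ + ‖z - y‖ ^ 2 := by
    rw [← norm_sub_sq_real, sub_sub_sub_cancel_right]
  have hinner : ⟪x - y, z - y⟫_ℝ ≤ 0 := by rw [real_inner_comm]; exact hz
  linarith

theorem subset_haugH_of_isMinOn {K : Set E} (hK : Convex ℝ K) {u v : E} (hv : v ∈ K)
    (hmin : IsMinOn (fun w => ‖u - w‖) K v) : K ⊆ haugH u v := by
  intro w hw
  rw [haugH, Set.mem_ofPred_eq, real_inner_comm]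
  exact (norm_eq_iInf_iff_real_inner_le_zero hK hv).1 (hmin.iInf_eq hv).symm w hw

end HaugH

theorem haugazeau_iteration_summable_general
    {E : Type*} [NormedAddCommGroup E] [InnerProductSpace ℝ E]
    (C : Set E) (hCne : C.Nonempty)
    (x₀ : E)
    (x xh : ℕ → E) (hx0 : x 0 = x₀)
    (hCH : ∀ n, C ⊆ haugH (x n) (xh n))
    (hproj : ∀ n, x (n + 1) ∈ haugH x₀ (x n) ∩ haugH (x n) (xh n) ∧
      ∀ y ∈ haugH x₀ (x n) ∩ haugH (x n) (xh n), ‖x₀ - x (n + 1)‖ ≤ ‖x₀ - y‖) :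
    Summable (fun n => ‖x (n + 1) - x n‖ ^ 2) ∧
      Summable (fun n => ‖xh n - x n‖ ^ 2) := by
  obtain ⟨c, hc⟩ := hCne
  have hC : ∀ n, C ⊆ haugH x₀ (x n) := by
    intro n
    induction n with
    | zero => intro z _; simp [haugH, hx0]
    | succ n ih =>
      refine fun z hz => subset_haugH_of_isMinOn ((convex_haugH _ _).inter (convex_haugH _ _))
        (hproj n).1 (fun y hy => (hproj n).2 y hy) ⟨ih hz, hCH n hz⟩
  have hbounded (n : ℕ) : ‖x₀ - x n‖ ^ 2 ≤ ‖x₀ - c‖ ^ 2 := by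
    have := norm_sub_sq_add_norm_sub_sq_le_of_mem_haugH (hC n hc)
    linarith [sq_nonneg ‖c - x n‖]
  have hsteps : Summable (fun n => ‖x (n + 1) - x n‖ ^ 2) :=
    summable_of_le_sub_succ_of_le (a := fun n => ‖x₀ - x n‖ ^ 2) (fun _ => by positivity)
      (fun n => by linarith [norm_sub_sq_add_norm_sub_sq_le_of_mem_haugH (hproj n).1.1])
      hbounded
  refine ⟨hsteps, hsteps.of_nonneg_of_le (fun _ => by positivity) fun n => ?_⟩
  have := norm_sub_sq_add_norm_sub_sq_le_of_mem_haugH (hproj n).1.2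
  rw [norm_sub_rev (x n), norm_sub_rev (x n)] at this
  linarith [sq_nonneg ‖x (n + 1) - xh n‖]

/-- In the Haugazeau iteration, `Σₙ ‖xₙ₊₁ - xₙ‖² < +∞` and
`Σₙ ‖xₙ₊½ - xₙ‖² < +∞`. -/
theorem haugazeau_iteration_summable
    {E : Type*} [NormedAddCommGroup E] [InnerProductSpace ℝ E] [CompleteSpace E]
    (C : Set E) (hCne : C.Nonempty) (hCcl : IsClosed C) (hCcv : Convex ℝ C)
    (x₀ : E)
    (x xh : ℕ → E) (hx0 : x 0 = x₀)
    (hCH : ∀ n, C ⊆ haugH (x n) (xh n))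
    (hproj : ∀ n, x (n + 1) ∈ haugH x₀ (x n) ∩ haugH (x n) (xh n) ∧
      ∀ y ∈ haugH x₀ (x n) ∩ haugH (x n) (xh n), ‖x₀ - x (n + 1)‖ ≤ ‖x₀ - y‖) :
    Summable (fun n => ‖x (n + 1) - x n‖ ^ 2) ∧
      Summable (fun n => ‖xh n - x n‖ ^ 2) :=
  haugazeau_iteration_summable_general C hCne x₀ x xh hx0 hCH hproj
end
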